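/- Let q(z) = Σ_{i=0}^n b_i z^i with q(0) = b_0 ≠ 0, deg q ≥ 1, with roots ζ_1,…,ζ_{deg q} counted with multiplicity, and let p(z) = Σ_{i=0}^n a_i z^i satisfy: |a_0 − b_0| ≤ |b_0|/2, |a_{deg q} − b_{deg q}| < |b_{deg q}|, max_i |a_i − b_i| ≤ Σ_i |b_i/b_0|, and max_i |a_i − b_i| ≤ (1/C)(2 max_k |ζ_k|)^{−n}, where C is the explicit constant from the perturbation bound applied to the degree-n reversed polynomials. Then every root λ of p satisfies either |λ|^{−1} ≤ C^{1/n} (max_i |a_i − b_i|)^{1/n}, or min_{k} |λ − ζ_k| ≤ 2 (max_k |ζ_k|)^2 C^{1/n} (max_i |a_i − b_i|)^{1/n}. -/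

import Mathlib

/-!
Put `μ = λ⁻¹` and let `f, g` be the reversals of `p, q` padded to degree `n`, so that `f(μ) = 0`.
Cauchy's bound for `f` shows `‖μ‖ ≤ D`. Since `f(μ) = 0`, the value `g(μ)/b₀` equals
`Σ_{i ≥ 1} (bᵢ/b₀ - aᵢ/a₀) μ^(n-i)`, so `‖g(μ)/b₀‖ ≤ C M` where `M = maxᵢ ‖aᵢ - bᵢ‖`.
The roots of `g` are the `ζₖ⁻¹` together with `n - deg q` copies of `0`, so
`g(μ)/b₀ = μ^(n - deg q) ∏ₖ (μ - ζₖ⁻¹)`. Of these `n` factors one is at most `ε = (C M)^(1/n)`.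
Either it is `μ` itself, or `‖μ - ζₖ⁻¹‖ ≤ ε ≤ 1/(2 max ‖ζ‖)`. In the second case `‖λ‖ ≤ 2 max ‖ζ‖`,
and `λ - ζₖ = λ ζₖ (ζₖ⁻¹ - μ)`.
-/

open Finset Polynomial

theorem Finset.sum_range_succ_eq_add_sum_Icc {M : Type*} [AddCommMonoid M] (f : ℕ → M) (n : ℕ) :
    ∑ i ∈ range (n + 1), f i = f 0 + ∑ i ∈ Icc 1 n, f i := by
  rw [range_eq_Ico, sum_eq_sum_Ico_succ_bot n.succ_pos, zero_add, Nat.succ_eq_add_one,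
    Ico_add_one_right_eq_Icc]

theorem exists_le_of_prod_mul_pow_le {ι : Type*} [Fintype ι] [Nonempty ι] {x : ι → ℝ}
    {y ε : ℝ} {m : ℕ} (hε : 0 ≤ ε) (h : (∏ i, x i) * y ^ m ≤ ε ^ (Fintype.card ι + m)) :
    y ≤ ε ∨ ∃ i, x i ≤ ε := by
  by_contra! hlt
  obtain ⟨hεy, hεx⟩ := hlt
  have hprod : ε ^ Fintype.card ι < ∏ i, x i := by
    rcases hε.eq_or_lt with rfl | hε
    · rw [zero_pow Fintype.card_ne_zero]
      exact prod_pos fun i _ => hεx i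
    · simpa using prod_lt_prod_of_nonempty (fun _ _ => hε) (fun i _ => hεx i) univ_nonempty
  have := mul_lt_mul_of_lt_of_le_of_nonneg_of_pos hprod (pow_le_pow_left₀ hε hεy.le m)
    (pow_nonneg hε _) (pow_pos (hε.trans_lt hεy) m)
  rw [← pow_add] at this
  linarith

theorem Real.mul_rpow_inv_natCast_le_inv {C M R : ℝ} {n : ℕ} (hn : n ≠ 0) (hC : 0 ≤ C)
    (hM : 0 ≤ M) (hR : 0 ≤ R) (h : M ≤ 1 / C * (R ^ n)⁻¹) : (C * M) ^ (n : ℝ)⁻¹ ≤ R⁻¹ := by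
  rw [Real.rpow_inv_le_iff_of_pos (mul_nonneg hC hM) (inv_nonneg.2 hR) (by positivity),
    Real.inv_rpow hR, Real.rpow_natCast]
  calc C * M ≤ C * (1 / C * (R ^ n)⁻¹) := mul_le_mul_of_nonneg_left h hC
    _ ≤ (R ^ n)⁻¹ := by
      rw [← mul_assoc, mul_one_div]
      exact mul_le_of_le_one_left (by positivity) (div_self_le_one C)

section NormedField

variable {K : Type*} [NormedField K]

theorem half_norm_le_norm_of_norm_sub_le {a b : K} (h : ‖a - b‖ ≤ ‖b‖ / 2) : ‖b‖ / 2 ≤ ‖a‖ := by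
  linarith [norm_le_norm_add_norm_sub a b]

theorem norm_div_sub_div_le {a₀ b₀ a b : K} {M : ℝ} (hb₀ : b₀ ≠ 0) (h₀ : ‖a₀ - b₀‖ ≤ ‖b₀‖ / 2)
    (hM₀ : ‖a₀ - b₀‖ ≤ M) (hM : ‖a - b‖ ≤ M) :
    ‖b / b₀ - a / a₀‖ ≤ 2 / ‖b₀‖ ^ 2 * (‖b₀‖ + ‖b‖) * M := by
  have hb : 0 < ‖b₀‖ := norm_pos_iff.2 hb₀
  have ha := half_norm_le_norm_of_norm_sub_le h₀
  have ha₀ : a₀ ≠ 0 := norm_pos_iff.1 (by linarith)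
  have hnum : ‖b * (a₀ - b₀) - (a - b) * b₀‖ ≤ (‖b₀‖ + ‖b‖) * M := by
    calc ‖b * (a₀ - b₀) - (a - b) * b₀‖ ≤ ‖b‖ * ‖a₀ - b₀‖ + ‖a - b‖ * ‖b₀‖ := by
          simpa only [norm_mul] using norm_sub_le (b * (a₀ - b₀)) ((a - b) * b₀)
      _ ≤ ‖b‖ * M + M * ‖b₀‖ := by gcongr
      _ = (‖b₀‖ + ‖b‖) * M := by ring
  calc ‖b / b₀ - a / a₀‖ = ‖b * (a₀ - b₀) - (a - b) * b₀‖ / (‖b₀‖ * ‖a₀‖) := by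
        rw [← norm_mul, ← norm_div]; congr 1; field_simp; ring
    _ ≤ (‖b₀‖ + ‖b‖) * M / (‖b₀‖ * (‖b₀‖ / 2)) := by
        gcongr
        exact (norm_nonneg _).trans hnum
    _ = 2 / ‖b₀‖ ^ 2 * (‖b₀‖ + ‖b‖) * M := by field_simp

theorem norm_sub_le_of_norm_inv_sub_inv_le {x z : K} {R ε : ℝ} (hx : x ≠ 0) (hz : z ≠ 0)
    (hzR : ‖z‖ ≤ R) (h : ‖x⁻¹ - z⁻¹‖ ≤ ε) (hεR : ε ≤ (2 * R)⁻¹) : ‖x - z‖ ≤ 2 * R ^ 2 * ε := by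
  have hR : 0 < R := (norm_pos_iff.2 hz).trans_le hzR
  have hzinv : R⁻¹ ≤ ‖z⁻¹‖ := by
    rw [norm_inv]; exact inv_anti₀ (norm_pos_iff.2 hz) hzR
  have hxinv : (2 * R)⁻¹ ≤ ‖x‖⁻¹ := by
    have : R⁻¹ = (2 * R)⁻¹ + (2 * R)⁻¹ := by field_simp; ring
    rw [← norm_inv]
    linarith [norm_le_norm_add_norm_sub x⁻¹ z⁻¹]
  have hxR : ‖x‖ ≤ 2 * R := (inv_le_inv₀ (by positivity) (norm_pos_iff.2 hx)).1 hxinv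
  calc ‖x - z‖ = ‖x‖ * ‖z‖ * ‖x⁻¹ - z⁻¹‖ := by
        rw [← norm_mul, ← norm_mul, norm_sub_rev]; congr 1; field_simp
    _ ≤ 2 * R * R * ε := by gcongr
    _ = 2 * R ^ 2 * ε := by ring

end NormedField

namespace Polynomial

variable {K : Type*}

theorem ne_zero_of_eq_C_mul_prod_of_coeff_zero_ne_zero [CommRing K] {ι : Type*} [Fintype ι]
    {q : K[X]} {ζ : ι → K} (hq : q = C q.leadingCoeff * ∏ k, (X - C (ζ k)))
    (hq0 : q.coeff 0 ≠ 0) (k : ι) : ζ k ≠ 0 := by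
  have hroot : q.eval (ζ k) = 0 := by
    rw [hq, eval_mul, eval_prod, prod_eq_zero (mem_univ k) (by simp), mul_zero]
  intro hk
  rw [hk, ← coeff_zero_eq_eval_zero] at hroot
  exact hq0 hroot

theorem eval_reflect_eq_sum [CommSemiring K] {f : K[X]} {N : ℕ} (hf : f.natDegree ≤ N) (x : K) :
    (reflect N f).eval x = ∑ i ∈ range (N + 1), f.coeff i * x ^ (N - i) := by
  rw [eval_eq_sum_range' ((natDegree_reflect_le.trans (max_le le_rfl hf)).trans_lt N.lt_succ_self),
    ← sum_range_reflect]
  refine sum_congr rfl fun i hi => ?_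
  rw [mem_range] at hi
  rw [coeff_reflect, revAt_le (by omega)]
  congr 2; omega

theorem eval_reflect_inv_mul_pow [Field K] {f : K[X]} {N : ℕ} (hf : f.natDegree ≤ N) {x : K}
    (hx : x ≠ 0) : (reflect N f).eval x⁻¹ * x ^ N = f.eval x := by
  let := invertibleOfNonzero hx
  simpa [invOf_eq_inv] using eval₂_reflect_mul_pow (RingHom.id K) x N f hf

theorem eval_reflect_inv_eq_zero [Field K] {f : K[X]} {N : ℕ} (hf : f.natDegree ≤ N) {x : K}
    (hx : x ≠ 0) (hfx : f.eval x = 0) : (reflect N f).eval x⁻¹ = 0 := by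
  have h := eval_reflect_inv_mul_pow hf hx
  rw [hfx] at h
  exact (mul_eq_zero.1 h).resolve_right (pow_ne_zero _ hx)

theorem eval_eq_coeff_zero_mul_pow_mul_prod [Field K] {ι : Type*} [Fintype ι] {q : K[X]}
    {ζ : ι → K} (hq : q = C q.leadingCoeff * ∏ k, (X - C (ζ k))) (hζ : ∀ k, ζ k ≠ 0) {x : K}
    (hx : x ≠ 0) : q.eval x = q.coeff 0 * x ^ Fintype.card ι * ∏ k, (x⁻¹ - (ζ k)⁻¹) := by
  rw [coeff_zero_eq_eval_zero, hq]
  simp only [eval_mul, eval_C, eval_prod, eval_sub, eval_X, zero_sub]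
  rw [mul_assoc, mul_assoc, ← card_univ, ← prod_const, ← prod_mul_distrib, ← prod_mul_distrib]
  congr 1
  refine prod_congr rfl fun k _ => ?_
  field_simp [hζ k]
  ring

theorem eval_reflect_div_coeff_zero_eq_pow_mul_prod [Field K] {ι : Type*} [Fintype ι] {q : K[X]}
    {ζ : ι → K} {n : ℕ} (hq : q = C q.leadingCoeff * ∏ k, (X - C (ζ k))) (hζ : ∀ k, ζ k ≠ 0)
    (hq0 : q.coeff 0 ≠ 0) (hqι : q.natDegree = Fintype.card ι) (hqn : q.natDegree ≤ n) {x : K}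
    (hx : x ≠ 0) :
    (reflect n q).eval x / q.coeff 0 = x ^ (n - Fintype.card ι) * ∏ k, (x - (ζ k)⁻¹) := by
  have h := eval_reflect_inv_mul_pow hqn (inv_ne_zero hx)
  rw [eval_eq_coeff_zero_mul_pow_mul_prod hq hζ (inv_ne_zero hx), inv_inv] at h
  have hpow := pow_sub_mul_pow x (hqι ▸ hqn : Fintype.card ι ≤ n)
  have hinv (m : ℕ) : x⁻¹ ^ m * x ^ m = 1 := by rw [← mul_pow, inv_mul_cancel₀ hx, one_pow]
  rw [div_eq_iff hq0]
  calc (reflect n q).eval x = (reflect n q).eval x * x⁻¹ ^ n * x ^ n := by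
        rw [mul_assoc, hinv, mul_one]
    _ = _ := by
        rw [h, ← hpow]
        linear_combination (q.coeff 0 * x ^ (n - Fintype.card ι) * ∏ k, (x - (ζ k)⁻¹)) *
          hinv (Fintype.card ι)

theorem eval_reflect_div_coeff_zero_eq_sum [Field K] {p q : K[X]} {n : ℕ} (hpn : p.natDegree ≤ n)
    (hqn : q.natDegree ≤ n) (hp0 : p.coeff 0 ≠ 0) (hq0 : q.coeff 0 ≠ 0) {x : K}
    (hx : (reflect n p).eval x = 0) :
    (reflect n q).eval x / q.coeff 0 =
      ∑ i ∈ Icc 1 n, (q.coeff i / q.coeff 0 - p.coeff i / p.coeff 0) * x ^ (n - i) := by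
  have hdiff : ∑ i ∈ range (n + 1), (q.coeff i / q.coeff 0 - p.coeff i / p.coeff 0) * x ^ (n - i) =
      (reflect n q).eval x / q.coeff 0 - (reflect n p).eval x / p.coeff 0 := by
    rw [eval_reflect_eq_sum hqn, eval_reflect_eq_sum hpn, sum_div, sum_div, ← sum_sub_distrib]
    exact sum_congr rfl fun i _ => by ring
  rwa [Finset.sum_range_succ_eq_add_sum_Icc, div_self hq0, div_self hp0, sub_self, zero_mul,
    zero_add, hx, zero_div, sub_zero, eq_comm] at hdiff

section NormedField

variable [NormedField K] {p q : K[X]} {n : ℕ} {c : ℕ → ℝ} {M : ℝ}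

theorem norm_lt_one_add_sum_of_eval_reflect_eq_zero (hpn : p.natDegree ≤ n)
    (hp0 : p.coeff 0 ≠ 0) {x : K} (hx : (reflect n p).eval x = 0) :
    ‖x‖ < 1 + ∑ i ∈ Icc 1 n, ‖p.coeff i / p.coeff 0‖ := by
  set f := reflect n p
  have hfn : f.coeff n = p.coeff 0 := by simp [f, coeff_reflect]
  have hf0 : f ≠ 0 := fun h => hp0 (by rw [← hfn, h, coeff_zero])
  have hdeg : f.natDegree = n :=
    (natDegree_reflect_le.trans (max_le le_rfl hpn)).antisymm (le_natDegree_of_ne_zero (hfn ▸ hp0))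
  have hsup : (range n).sup (‖f.coeff ·‖₊) ≤ ∑ i ∈ Icc 1 n, ‖p.coeff i‖₊ := by
    refine Finset.sup_le fun j hj => ?_
    rw [mem_range] at hj
    rw [coeff_reflect, revAt_le hj.le]
    exact single_le_sum (f := (‖p.coeff ·‖₊)) (fun _ _ => zero_le) (mem_Icc.2 ⟨by omega, by omega⟩)
  have hcauchy := IsRoot.norm_lt_cauchyBound hf0 hx
  rw [cauchyBound, hdeg, leadingCoeff, hdeg, hfn] at hcauchy
  have hle := hcauchy.trans_le (add_le_add_left (div_le_div_of_nonneg_right hsup zero_le) 1)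
  rw [← NNReal.coe_lt_coe] at hle
  simpa [norm_div, sum_div, add_comm] using hle

theorem one_add_sum_norm_coeff_div_le (hc : ∀ i, 0 ≤ c i) (hq0 : q.coeff 0 ≠ 0)
    (hcoeff : ∀ i ≤ n, ‖q.coeff i / q.coeff 0 - p.coeff i / p.coeff 0‖ ≤ c i * M)
    (hM : M ≤ ∑ i ∈ range (n + 1), ‖q.coeff i / q.coeff 0‖) :
    1 + ∑ i ∈ Icc 1 n, ‖p.coeff i / p.coeff 0‖ ≤
      (1 + ∑ i ∈ range (n + 1), c i) * ∑ i ∈ range (n + 1), ‖q.coeff i / q.coeff 0‖ := by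
  set S := ∑ i ∈ range (n + 1), ‖q.coeff i / q.coeff 0‖
  have hS : 1 + ∑ i ∈ Icc 1 n, ‖q.coeff i / q.coeff 0‖ = S := by
    simp only [S]
    rw [Finset.sum_range_succ_eq_add_sum_Icc, div_self hq0, norm_one]
  have hIcc : Icc 1 n ⊆ range (n + 1) := fun i hi => by
    rw [mem_Icc] at hi; rw [mem_range]; omega
  have hp : ∑ i ∈ Icc 1 n, ‖p.coeff i / p.coeff 0‖ ≤
      ∑ i ∈ Icc 1 n, ‖q.coeff i / q.coeff 0‖ + (∑ i ∈ Icc 1 n, c i) * M := by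
    rw [sum_mul, ← sum_add_distrib]
    refine sum_le_sum fun i hi => ?_
    linarith [norm_le_norm_add_norm_sub (q.coeff i / q.coeff 0) (p.coeff i / p.coeff 0),
      hcoeff i (mem_Icc.1 hi).2]
  have hcM : (∑ i ∈ Icc 1 n, c i) * M ≤ (∑ i ∈ range (n + 1), c i) * S :=
    (mul_le_mul_of_nonneg_left hM (sum_nonneg fun i _ => hc i)).trans
      (mul_le_mul_of_nonneg_right (sum_le_sum_of_subset_of_nonneg hIcc fun i _ _ => hc i)
        (sum_nonneg fun i _ => norm_nonneg _))
  linarith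

theorem norm_eval_reflect_div_coeff_zero_le (hpn : p.natDegree ≤ n) (hqn : q.natDegree ≤ n)
    (hp0 : p.coeff 0 ≠ 0) (hq0 : q.coeff 0 ≠ 0) (hc : ∀ i, 0 ≤ c i)
    (hcoeff : ∀ i ≤ n, ‖q.coeff i / q.coeff 0 - p.coeff i / p.coeff 0‖ ≤ c i * M)
    (hM : M ≤ ∑ i ∈ range (n + 1), ‖q.coeff i / q.coeff 0‖) {x : K}
    (hx : (reflect n p).eval x = 0) :
    ‖(reflect n q).eval x / q.coeff 0‖ ≤ (∑ i ∈ Icc 1 n, c i *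
      ((1 + ∑ i ∈ range (n + 1), c i) * ∑ i ∈ range (n + 1), ‖q.coeff i / q.coeff 0‖) ^ (n - i)) *
        M := by
  have hxD := (norm_lt_one_add_sum_of_eval_reflect_eq_zero hpn hp0 hx).le.trans
    (one_add_sum_norm_coeff_div_le hc hq0 hcoeff hM)
  rw [eval_reflect_div_coeff_zero_eq_sum hpn hqn hp0 hq0 hx, sum_mul]
  refine (norm_sum_le _ _).trans (sum_le_sum fun i hi => ?_)
  have hi := hcoeff i (mem_Icc.1 hi).2
  rw [norm_mul, norm_pow, mul_right_comm]
  exact mul_le_mul hi (pow_le_pow_left₀ (norm_nonneg _) hxD _) (by positivity)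
    ((norm_nonneg _).trans hi)

end NormedField

end Polynomial

theorem quantitative_ostrowski_like_general (n N : ℕ) (hN : 0 < N)
    (q p : Polynomial ℂ) (hq0 : q.coeff 0 ≠ 0) (hqN : q.natDegree = N)
    (hqn : q.natDegree ≤ n) (hpn : p.natDegree ≤ n)
    (ζ : Fin N → ℂ)
    (hfac : q = Polynomial.C q.leadingCoeff * ∏ k : Fin N, (X - Polynomial.C (ζ k)))
    (Mroot : ℝ)
    (hMroot : Mroot = Finset.univ.sup' (Finset.univ_nonempty_iff.mpr ⟨⟨0, hN⟩⟩)
      (fun k => ‖ζ k‖))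
    (Mc : ℝ)
    (hMc : Mc = (Finset.range (n + 1)).sup'
      (Finset.nonempty_range_iff.mpr (Nat.succ_ne_zero n))
      (fun i => ‖p.coeff i - q.coeff i‖))
    (D Cc : ℝ)
    (hD : D = (1 + ∑ i ∈ Finset.range (n + 1),
        2 / ‖q.coeff 0‖ ^ 2 * (‖q.coeff 0‖ + ‖q.coeff i‖)) *
      ∑ i ∈ Finset.range (n + 1), ‖q.coeff i / q.coeff 0‖)
    (hC : Cc = ∑ i ∈ Finset.Icc 1 n,
      2 / ‖q.coeff 0‖ ^ 2 * (‖q.coeff 0‖ + ‖q.coeff i‖) * D ^ (n - i))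
    (h1 : ‖p.coeff 0 - q.coeff 0‖ ≤ ‖q.coeff 0‖ / 2)
    (h3 : Mc ≤ ∑ i ∈ Finset.range (n + 1), ‖q.coeff i / q.coeff 0‖)
    (h4 : Mc ≤ 1 / Cc * ((2 * Mroot) ^ n)⁻¹) :
    ∀ lam : ℂ, p.eval lam = 0 →
      ‖lam‖⁻¹ ≤ Cc ^ ((n : ℝ)⁻¹) * Mc ^ ((n : ℝ)⁻¹) ∨
      ∃ k : Fin N, ‖lam - ζ k‖ ≤
        2 * Mroot ^ 2 * Cc ^ ((n : ℝ)⁻¹) * Mc ^ ((n : ℝ)⁻¹) := by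
  intro lam hlam
  have hn : n ≠ 0 := by omega
  have hMci (i : ℕ) (hi : i ≤ n) : ‖p.coeff i - q.coeff i‖ ≤ Mc :=
    hMc ▸ le_sup' (fun i => ‖p.coeff i - q.coeff i‖) (mem_range.2 (by omega))
  have hMc0 : 0 ≤ Mc := (norm_nonneg _).trans (hMci 0 n.zero_le)
  set c : ℕ → ℝ := fun i => 2 / ‖q.coeff 0‖ ^ 2 * (‖q.coeff 0‖ + ‖q.coeff i‖)
  have hc (i : ℕ) : 0 ≤ c i := by positivity
  have hD0 : 0 ≤ D := hD ▸ mul_nonneg (add_nonneg zero_le_one (sum_nonneg fun i _ => hc i))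
    (sum_nonneg fun i _ => norm_nonneg _)
  have hCc0 : 0 ≤ Cc := hC ▸ sum_nonneg fun i _ => mul_nonneg (hc i) (pow_nonneg hD0 _)
  have hp0 : p.coeff 0 ≠ 0 := norm_pos_iff.1
    ((half_pos (norm_pos_iff.2 hq0)).trans_le (half_norm_le_norm_of_norm_sub_le h1))
  have hlam0 : lam ≠ 0 := by rintro rfl; exact hp0 (by rwa [coeff_zero_eq_eval_zero])
  have hζ := ne_zero_of_eq_C_mul_prod_of_coeff_zero_ne_zero hfac hq0
  have hζR (k : Fin N) : ‖ζ k‖ ≤ Mroot := hMroot ▸ le_sup' (fun k => ‖ζ k‖) (mem_univ k)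
  have hpert := norm_eval_reflect_div_coeff_zero_le hpn hqn hp0 hq0 hc
    (fun i hi => norm_div_sub_div_le hq0 h1 (hMci 0 n.zero_le) (hMci i hi)) h3
    (eval_reflect_inv_eq_zero hpn hlam0 hlam)
  rw [← hD, ← hC, eval_reflect_div_coeff_zero_eq_pow_mul_prod hfac hζ hq0
    (hqN.trans (Fintype.card_fin N).symm) hqn (inv_ne_zero hlam0), norm_mul, norm_pow,
    norm_prod, mul_comm] at hpert
  have hεR := Real.mul_rpow_inv_natCast_le_inv hn hCc0 hMc0
    (mul_nonneg zero_le_two ((norm_nonneg _).trans (hζR ⟨0, hN⟩))) h4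
  simp only [mul_assoc (2 * Mroot ^ 2), ← Real.mul_rpow hCc0 hMc0]
  have : Nonempty (Fin N) := ⟨⟨0, hN⟩⟩
  rcases exists_le_of_prod_mul_pow_le (Real.rpow_nonneg (mul_nonneg hCc0 hMc0) _)
    (hpert.trans_eq (by rw [Fintype.card_fin, Nat.add_sub_cancel' (hqN ▸ hqn),
      Real.rpow_inv_natCast_pow (mul_nonneg hCc0 hMc0) hn])) with h | ⟨k, hk⟩
  · exact Or.inl (by rwa [norm_inv] at h)
  · exact Or.inr ⟨k, norm_sub_le_of_norm_inv_sub_inv_le hlam0 (hζ k) (hζR k) hk hεR⟩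

/-- Quantitative root continuity for nonmonic polynomials: under the stated closeness
hypotheses on the coefficients, every root λ of p either has |λ|⁻¹ ≤ C^{1/n} M^{1/n}
or is within 2 (max_k |ζ_k|)² C^{1/n} M^{1/n} of some root ζ_k of q, where
M = max_i |a_i − b_i|. -/
theorem quantitative_ostrowski_like (n N : ℕ) (hN : 0 < N)
    (q p : Polynomial ℂ) (hq0 : q.coeff 0 ≠ 0) (hqN : q.natDegree = N)
    (hqn : q.natDegree ≤ n) (hpn : p.natDegree ≤ n)
    (ζ : Fin N → ℂ)
    (hfac : q = Polynomial.C q.leadingCoeff * ∏ k : Fin N, (X - Polynomial.C (ζ k)))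
    (Mroot : ℝ)
    (hMroot : Mroot = Finset.univ.sup' (Finset.univ_nonempty_iff.mpr ⟨⟨0, hN⟩⟩)
      (fun k => ‖ζ k‖))
    (Mc : ℝ)
    (hMc : Mc = (Finset.range (n + 1)).sup'
      (Finset.nonempty_range_iff.mpr (Nat.succ_ne_zero n))
      (fun i => ‖p.coeff i - q.coeff i‖))
    (D Cc : ℝ)
    (hD : D = (1 + ∑ i ∈ Finset.range (n + 1),
        2 / ‖q.coeff 0‖ ^ 2 * (‖q.coeff 0‖ + ‖q.coeff i‖)) *
      ∑ i ∈ Finset.range (n + 1), ‖q.coeff i / q.coeff 0‖)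
    (hC : Cc = ∑ i ∈ Finset.Icc 1 n,
      2 / ‖q.coeff 0‖ ^ 2 * (‖q.coeff 0‖ + ‖q.coeff i‖) * D ^ (n - i))
    (h1 : ‖p.coeff 0 - q.coeff 0‖ ≤ ‖q.coeff 0‖ / 2)
    (h2 : ‖p.coeff N - q.coeff N‖ < ‖q.coeff N‖)
    (h3 : Mc ≤ ∑ i ∈ Finset.range (n + 1), ‖q.coeff i / q.coeff 0‖)
    (h4 : Mc ≤ 1 / Cc * ((2 * Mroot) ^ n)⁻¹) :
    ∀ lam : ℂ, p.eval lam = 0 →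
      ‖lam‖⁻¹ ≤ Cc ^ ((n : ℝ)⁻¹) * Mc ^ ((n : ℝ)⁻¹) ∨
      ∃ k : Fin N, ‖lam - ζ k‖ ≤
        2 * Mroot ^ 2 * Cc ^ ((n : ℝ)⁻¹) * Mc ^ ((n : ℝ)⁻¹) :=
  quantitative_ostrowski_like_general n N hN q p hq0 hqN hqn hpn ζ hfac Mroot hMroot Mc hMc D Cc hD
    hC h1 h3 h4
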